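/- arXiv:1004.2961 — 6 statements merged into one kernel-verified Lean document; each statement's English description precedes it below -/
import Mathlib

section
/- Let p be an odd prime and D = ⟨τ, σ⟩ the dihedral group of order 2p acting on an abelian group A (written multiplicatively). Let A_K = A^{⟨σ⟩} and A_{K'} = A^{⟨τ²σ⟩}. Then the subgroup A_K · A_{K'} of A is stable under the action of D and equals the product ∏_{j=0}^{p-2} τ^j(A_K). -/
/-- Fixed-point subgroup of an automorphism of an abelian group. -/
def fixM {A : Type*} [CommGroup A] (f : MulAut A) : Subgroup A where
  carrier := {a | f a = a}
  one_mem' := by simp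
  mul_mem' := by
    intro a b ha hb
    simp only [Set.mem_setOf_eq, map_mul] at *
    rw [ha, hb]
  inv_mem' := by
    intro a ha
    simp only [Set.mem_setOf_eq, map_inv] at *
    rw [ha]

theorem mem_fixM {A : Type*} [CommGroup A] (f : MulAut A) (a : A) :
    a ∈ fixM f ↔ f a = a := Iff.rfl

/-- Let `p` be an odd prime and `D = ⟨τ,σ⟩` dihedral of order `2p` acting on an abelian
group `A`.  With `A_K = A^{⟨σ⟩}` and `A_{K'} = A^{⟨τ²σ⟩}`, the subgroup `A_K·A_{K'}` is
stable under the action of `D` and equals `∏_{j=0}^{p-2} τ^j(A_K)`. -/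
theorem stmt_7 {A : Type*} [CommGroup A] (p : ℕ) [Fact p.Prime] (hp : Odd p)
    (τ σ : MulAut A) (hτ : τ ^ p = 1) (hσ : σ ^ 2 = 1) (hc : σ * τ * σ = τ⁻¹) :
    (∀ a ∈ fixM σ ⊔ fixM (τ ^ 2 * σ),
        τ a ∈ fixM σ ⊔ fixM (τ ^ 2 * σ) ∧ σ a ∈ fixM σ ⊔ fixM (τ ^ 2 * σ)) ∧
    fixM σ ⊔ fixM (τ ^ 2 * σ)
      = ⨆ j ∈ Finset.range (p - 1), (fixM σ).map (τ ^ j).toMonoidHom := by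
  have hprime : p.Prime := Fact.out
  have hp3 : 3 ≤ p := by
    have h2 : 2 ≤ p := hprime.two_le
    have hne : p ≠ 2 := by
      intro h; rw [h] at hp; simp [Nat.odd_iff] at hp
    omega
  have hp1eq : p - 1 + 1 = p := Nat.sub_add_cancel (by omega : 1 ≤ p)
  -- basic relations
  have e1 : σ * τ = τ⁻¹ * σ := by
    have h : σ * τ * σ * σ = τ⁻¹ * σ := by rw [hc]
    rwa [mul_assoc (σ * τ), ← sq, hσ, mul_one] at h
  have e2' : τ * (σ * τ) = σ := by
    rw [e1, ← mul_assoc, mul_inv_cancel, one_mul]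
  have e2 : σ * τ⁻¹ = τ * σ := by
    calc σ * τ⁻¹ = τ * (σ * τ) * τ⁻¹ := by rw [e2']
      _ = τ * σ := by group
  have ptσ : ∀ a : A, σ (τ a) = τ⁻¹ (σ a) := fun a => by
    rw [← MulAut.mul_apply, e1, MulAut.mul_apply]
  have ptσ' : ∀ a : A, σ (τ⁻¹ a) = τ (σ a) := fun a => by
    rw [← MulAut.mul_apply, e2, MulAut.mul_apply]
  have hτinv : τ⁻¹ = τ ^ (p - 1) := by
    have h : τ ^ (p - 1) * τ = 1 := by rw [← pow_succ, hp1eq, hτ]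
    exact inv_eq_of_mul_eq_one_left h
  -- the "norm-like" element of the key induction
  have hd : ∀ a : A, σ a = a → σ (τ a * τ⁻¹ a) = τ a * τ⁻¹ a := by
    intro a ha
    rw [map_mul, ptσ, ptσ', ha, mul_comm]
  -- every τ^j (fixM σ) lies in the sup
  have aux : ∀ j : ℕ, ∀ a : A, σ a = a → (τ ^ j) a ∈ fixM σ ⊔ fixM (τ ^ 2 * σ) := by
    intro j
    induction j using Nat.twoStepInduction with
    | zero =>
      intro a ha
      exact Subgroup.mem_sup_left (by simpa [mem_fixM] using ha)
    | one =>
      intro a ha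
      apply Subgroup.mem_sup_right
      rw [mem_fixM]
      rw [pow_one, MulAut.mul_apply, ptσ, ha, ← MulAut.mul_apply]
      congr 1
      group
    | more j ih ih1 =>
      intro a ha
      have hexpr : (τ ^ (j + 2)) a = (τ ^ (j + 1)) (τ a * τ⁻¹ a) * ((τ ^ j) a)⁻¹ := by
        rw [map_mul]
        have h1 : (τ ^ (j + 1)) (τ a) = (τ ^ (j + 2)) a := by
          rw [← MulAut.mul_apply, ← pow_succ]
        have h2 : (τ ^ (j + 1)) (τ⁻¹ a) = (τ ^ j) a := by
          rw [← MulAut.mul_apply]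
          congr 1
          rw [pow_succ]
          group
        rw [h1, h2, mul_inv_cancel_right]
      rw [hexpr]
      exact mul_mem (ih1 _ (hd a ha)) (inv_mem (ih a ha))
  -- the second fixed subgroup is τ (fixM σ)
  have hF' : fixM (τ ^ 2 * σ) = (fixM σ).map τ.toMonoidHom := by
    ext b
    simp only [Subgroup.mem_map]
    constructor
    · intro hb
      rw [mem_fixM, MulAut.mul_apply] at hb
      refine ⟨τ⁻¹ b, ?_, ?_⟩
      · rw [mem_fixM, ptσ']
        have h := congrArg (fun x => τ⁻¹ x) hb
        rw [← MulAut.mul_apply] at h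
        have : τ⁻¹ * τ ^ 2 = τ := by group
        rw [this] at h
        exact h
      · show τ (τ⁻¹ b) = b
        rw [← MulAut.mul_apply, mul_inv_cancel, MulAut.one_apply]
    · rintro ⟨a, ha, rfl⟩
      rw [mem_fixM] at ha ⊢
      show (τ ^ 2 * σ) (τ a) = τ a
      rw [MulAut.mul_apply, ptσ, ha, ← MulAut.mul_apply]
      congr 1
      group
  constructor
  · -- stability
    intro a ha
    rw [Subgroup.mem_sup] at ha
    obtain ⟨y, hy, z, hz, rfl⟩ := ha
    rw [mem_fixM] at hy
    rw [hF', Subgroup.mem_map] at hz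
    obtain ⟨w, hw, rfl⟩ := hz
    rw [mem_fixM] at hw
    constructor
    · rw [map_mul]
      refine mul_mem ?_ ?_
      · have := aux 1 y hy
        rwa [pow_one] at this
      · have := aux 2 w hw
        show τ (τ w) ∈ _
        rwa [sq, MulAut.mul_apply] at this
    · rw [map_mul]
      refine mul_mem ?_ ?_
      · rw [hy]
        exact Subgroup.mem_sup_left (by simpa [mem_fixM] using hy)
      · show σ (τ w) ∈ _
        rw [ptσ, hw, hτinv]
        exact aux (p - 1) w hw
  · -- the product formula
    apply le_antisymm
    · apply sup_le
      · refine le_trans ?_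
          (le_iSup₂ (f := fun j (_ : j ∈ Finset.range (p - 1)) =>
            (fixM σ).map ((τ ^ j).toMonoidHom)) 0 (by simp; omega))
        intro b hb
        exact Subgroup.mem_map.2 ⟨b, hb, rfl⟩
      · rw [hF']
        refine le_trans ?_
          (le_iSup₂ (f := fun j (_ : j ∈ Finset.range (p - 1)) =>
            (fixM σ).map ((τ ^ j).toMonoidHom)) 1 (by simp; omega))
        rw [pow_one]
    · refine iSup_le fun j => iSup_le fun _ => ?_
      intro b hb
      rw [Subgroup.mem_map] at hb
      obtain ⟨a, ha, rfl⟩ := hb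
      exact aux j a (by rwa [mem_fixM] at ha)
end

section
/- Let p be an odd prime, D the dihedral group of order 2p acting on an abelian group A, G = ⟨τ⟩ its subgroup of order p, A_K = A^{⟨σ⟩}, A_{K'} = A^{⟨τ²σ⟩}. Then the augmentation submodule I_G·A (generated by elements a^{τ}·a^{-1}) is contained in A_K · A_{K'}. -/
/-- Let `p` be an odd prime and `D = ⟨τ,σ⟩` dihedral of order `2p` acting on an abelian
group `A`, `G = ⟨τ⟩`.  Then the augmentation subgroup `I_G·A`, generated by the elements
`τ(a)·a⁻¹`, is contained in `A_K·A_{K'} = A^{⟨σ⟩}·A^{⟨τ²σ⟩}`. -/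
theorem stmt_8 {A : Type*} [CommGroup A] (p : ℕ) [Fact p.Prime] (hp : Odd p)
    (τ σ : MulAut A) (hτ : τ ^ p = 1) (hσ : σ ^ 2 = 1) (hc : σ * τ * σ = τ⁻¹) :
    Subgroup.closure (Set.range fun a : A => τ a * a⁻¹)
      ≤ fixM σ ⊔ fixM (τ ^ 2 * σ) := by
  set H := fixM σ ⊔ fixM (τ ^ 2 * σ) with hH
  have hσσ : σ * σ = 1 := by rw [← sq]; exact hσ
  have hτσ : τ * σ = σ * τ⁻¹ := by
    have h := congrArg (σ * ·) hc
    simpa [← mul_assoc, hσσ] using h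
  have h1 : τ * σ * τ = σ := by
    rw [hτσ]; group
  have hA : τ ^ 2 * σ * τ ^ 2 = σ := by
    have e : τ ^ 2 * σ * τ ^ 2 = τ * (τ * σ * τ) * τ := by
      simp only [sq, mul_assoc]
    rw [e, h1, h1]
  have hσσ' : ∀ a : A, σ (σ a) = a := by
    intro a
    have := congrArg (fun f : MulAut A => f a) hσσ
    simpa using this
  -- first factor lies in fix σ
  have hfix1 : ∀ a : A, a * σ a ∈ fixM σ := by
    intro a
    show σ (a * σ a) = a * σ a
    rw [map_mul, hσσ' a, mul_comm]
  -- second factor lies in fix (τ²σ)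
  have hfix2 : ∀ a : A, τ (τ a) * σ a ∈ fixM (τ ^ 2 * σ) := by
    intro a
    show (τ ^ 2 * σ) (τ (τ a) * σ a) = τ (τ a) * σ a
    have e1 : (τ ^ 2 * σ) (τ (τ a)) = σ a := by
      have := congrArg (fun f : MulAut A => f a) hA
      simpa [MulAut.mul_apply, sq] using this
    have e2 : (τ ^ 2 * σ) (σ a) = τ (τ a) := by
      simp [MulAut.mul_apply, sq, hσσ' a]
    rw [map_mul, e1, e2, mul_comm]
  -- key step: τ²(a) * a⁻¹ ∈ H
  have key : ∀ a : A, τ (τ a) * a⁻¹ ∈ H := by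
    intro a
    have hdecomp : τ (τ a) * a⁻¹ = (a * σ a)⁻¹ * (τ (τ a) * σ a) := by
      rw [mul_inv, mul_comm a⁻¹ (σ a)⁻¹, mul_assoc, mul_comm (τ (τ a)) (σ a),
        mul_left_comm a⁻¹ (σ a), ← mul_assoc (σ a)⁻¹, inv_mul_cancel, one_mul, mul_comm]
    rw [hdecomp]
    exact mul_mem (Subgroup.mem_sup_left (inv_mem (hfix1 a)))
      (Subgroup.mem_sup_right (hfix2 a))
  -- iterate: (τ²)ⁿ(a) * a⁻¹ ∈ H
  have keyn : ∀ n : ℕ, ∀ a : A, ((τ ^ 2) ^ n) a * a⁻¹ ∈ H := by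
    intro n
    induction n with
    | zero =>
      intro a
      simpa using one_mem H
    | succ n ih =>
      intro a
      have hb : ((τ ^ 2) ^ (n + 1)) a = τ (τ (((τ ^ 2) ^ n) a)) := by
        have : (τ ^ 2) ^ (n + 1) = τ ^ 2 * (τ ^ 2) ^ n := by rw [pow_succ']
        rw [this]
        simp [MulAut.mul_apply, sq]
      rw [hb]
      have : τ (τ (((τ ^ 2) ^ n) a)) * a⁻¹ =
          (τ (τ (((τ ^ 2) ^ n) a)) * (((τ ^ 2) ^ n) a)⁻¹) * (((τ ^ 2) ^ n) a * a⁻¹) := by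
        group
      rw [this]
      exact mul_mem (key _) (ih a)
  -- since p is odd, τ = (τ²)^((p+1)/2)
  have hpow : (τ ^ 2) ^ ((p + 1) / 2) = τ := by
    rw [← pow_mul]
    obtain ⟨k, hk⟩ := hp
    have h2 : 2 * ((p + 1) / 2) = p + 1 := by omega
    rw [h2, pow_succ, hτ, one_mul]
  rw [Subgroup.closure_le]
  rintro x ⟨a, rfl⟩
  have := keyn ((p + 1) / 2) a
  rwa [hpow] at this
end

section
/- Let p be an odd prime and D the dihedral group of order 2p acting on a ℤ_p-module U, with G = ⟨τ⟩ cyclic of order p. Assume tor(U) = tor(U^G) (the torsion of U is fixed by G). Write Ū = U/tor(U), Ū_F = U^G/tor(U^G). Then the map φ : I_G U ∩ U^G → Ū^G/Ū_F defined by φ(u^{1-τ}) = class of u is a well-defined group isomorphism. -/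
/-- Fixed-point submodule of a linear automorphism. -/
def fixL (p : ℕ) [Fact p.Prime] (U : Type*) [AddCommGroup U] [Module ℤ_[p] U]
    (f : U ≃ₗ[ℤ_[p]] U) : Submodule ℤ_[p] U where
  carrier := {m | f m = m}
  zero_mem' := by simp
  add_mem' := by
    intro a b ha hb
    simp only [Set.mem_setOf_eq, map_add] at *
    rw [ha, hb]
  smul_mem' := by
    intro c m hm
    simp only [Set.mem_setOf_eq, map_smul] at *
    rw [hm]

/-- The automorphism of `Ū = U/tor(U)` induced by a linear automorphism of `U`
(automorphisms preserve the torsion submodule). -/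
noncomputable def qmap (p : ℕ) [Fact p.Prime] (U : Type*) [AddCommGroup U]
    [Module ℤ_[p] U] (f : U ≃ₗ[ℤ_[p]] U) :
    (U ⧸ Submodule.torsion ℤ_[p] U) →ₗ[ℤ_[p]] (U ⧸ Submodule.torsion ℤ_[p] U) :=
  Submodule.mapQ _ _ f.toLinearMap (by
    intro u hu
    obtain ⟨c, hc⟩ := hu
    exact Submodule.mem_comap.2 ⟨c, by
      show (c : ℤ_[p]) • (f u : U) = 0
      rw [← map_smul f (c : ℤ_[p]) u, show (c : ℤ_[p]) • u = 0 from hc, map_zero]⟩)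

/-- `Ū^G`: the fixed points of the induced action of `τ` on `Ū = U/tor(U)`. -/
noncomputable def UGbar (p : ℕ) [Fact p.Prime] (U : Type*) [AddCommGroup U]
    [Module ℤ_[p] U] (τ : U ≃ₗ[ℤ_[p]] U) : Submodule ℤ_[p] (U ⧸ Submodule.torsion ℤ_[p] U) :=
  LinearMap.eqLocus (qmap p U τ) LinearMap.id

/-- `Ū_F`: the image of `U_F = U^G` in `Ū = U/tor(U)`. -/
noncomputable def UFbar (p : ℕ) [Fact p.Prime] (U : Type*) [AddCommGroup U]
    [Module ℤ_[p] U] (τ : U ≃ₗ[ℤ_[p]] U) : Submodule ℤ_[p] (U ⧸ Submodule.torsion ℤ_[p] U) :=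
  (fixL p U τ).map (Submodule.torsion ℤ_[p] U).mkQ

/-! Since `τ` fixes `tor(U)`, `ū ↦ u - τ u` is a well-defined map `Ū^G → I_G U ∩ U^G`; its
kernel is `Ū_F`, again because `τ` fixes `tor(U)`. It is onto: if `τ` fixes `u - τ u`, then
`p • (u - τ u) = u - τ ^ p u = 0`, so `u - τ u` is torsion, i.e. `ū` is `τ`-fixed. -/

open Submodule
open scoped nonZeroDivisors

section

variable {R M : Type*} [AddCommGroup M]

theorem LinearEquiv.sub_pow_apply_eq_nsmul [Semiring R] [Module R M] (f : M ≃ₗ[R] M) {u : M}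
    (hfix : f (u - f u) = u - f u) (k : ℕ) : u - (f ^ k) u = k • (u - f u) := by
  induction k with
  | zero => simp
  | succ k ih =>
    have hfix_pow : (f ^ k) (u - f u) = u - f u := by
      rw [LinearEquiv.pow_apply, Function.IsFixedPt.iterate hfix k]
    calc u - (f ^ (k + 1)) u = (u - (f ^ k) u) + (f ^ k) (u - f u) := by
          rw [pow_succ, LinearEquiv.mul_apply, map_sub]; abel
      _ = (k + 1) • (u - f u) := by rw [ih, hfix_pow, succ_nsmul]

theorem LinearEquiv.sub_apply_mem_torsion_of_pow_eq_one [CommRing R] [Module R M]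
    (f : M ≃ₗ[R] M) {n : ℕ} (hn : (n : R) ∈ R⁰) (hf : f ^ n = 1) {u : M}
    (hfix : f (u - f u) = u - f u) : u - f u ∈ torsion R M := by
  refine ⟨⟨n, hn⟩, ?_⟩
  rw [Submonoid.smul_def, Nat.cast_smul_eq_nsmul, ← f.sub_pow_apply_eq_nsmul hfix, hf]
  simp

end

section CoboundaryOfUGbar

variable {p : ℕ} [Fact p.Prime] {U : Type*} [AddCommGroup U] [Module ℤ_[p] U]
  {τ : U ≃ₗ[ℤ_[p]] U}

theorem mem_fixL_iff {u : U} : u ∈ fixL p U τ ↔ τ u = u := Iff.rfl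

theorem qmap_mkQ (u : U) :
    qmap p U τ ((torsion ℤ_[p] U).mkQ u) = (torsion ℤ_[p] U).mkQ (τ u) :=
  rfl

theorem mkQ_mem_UGbar_iff {u : U} :
    (torsion ℤ_[p] U).mkQ u ∈ UGbar p U τ ↔ u - τ u ∈ torsion ℤ_[p] U := by
  rw [UGbar, LinearMap.mem_eqLocus, qmap_mkQ, LinearMap.id_apply, mkQ_apply, mkQ_apply,
    Submodule.Quotient.eq, ← neg_mem_iff, neg_sub]

theorem torsion_le_ker_id_sub (htor : torsion ℤ_[p] U ≤ fixL p U τ) :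
    torsion ℤ_[p] U ≤ LinearMap.ker (LinearMap.id - τ.toLinearMap) :=
  fun u hu ↦ by simp [(mem_fixL_iff.1 (htor hu))]

noncomputable def coboundaryOfUGbar (htor : torsion ℤ_[p] U ≤ fixL p U τ) :
    UGbar p U τ →ₗ[ℤ_[p]]
      ↥(LinearMap.range (LinearMap.id - τ.toLinearMap) ⊓ fixL p U τ) :=
  LinearMap.codRestrict _
    (((torsion ℤ_[p] U).liftQ _ (torsion_le_ker_id_sub htor)).comp (UGbar p U τ).subtype) <| by
    rintro ⟨v, hv⟩
    obtain ⟨u, rfl⟩ := (torsion ℤ_[p] U).mkQ_surjective v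
    exact ⟨⟨u, rfl⟩, htor (mkQ_mem_UGbar_iff.1 hv)⟩

theorem coboundaryOfUGbar_mkQ (htor : torsion ℤ_[p] U ≤ fixL p U τ) {u : U}
    (hu : (torsion ℤ_[p] U).mkQ u ∈ UGbar p U τ) :
    (coboundaryOfUGbar htor ⟨_, hu⟩ : U) = u - τ u :=
  rfl

theorem ker_coboundaryOfUGbar (htor : torsion ℤ_[p] U ≤ fixL p U τ) :
    LinearMap.ker (coboundaryOfUGbar htor) = (UFbar p U τ).comap (UGbar p U τ).subtype := by
  ext ⟨v, hv⟩
  obtain ⟨u, rfl⟩ := (torsion ℤ_[p] U).mkQ_surjective v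
  rw [LinearMap.mem_ker, ← Subtype.coe_inj, coboundaryOfUGbar_mkQ, ZeroMemClass.coe_zero,
    sub_eq_zero, mem_comap, subtype_apply, UFbar, mem_map]
  constructor
  · exact fun h ↦ ⟨u, h.symm, rfl⟩
  · rintro ⟨w, hw, hwu⟩
    have hdiff : τ (w - u) = w - u := mem_fixL_iff.1 (htor ((Submodule.Quotient.eq _).1 hwu))
    rw [map_sub, mem_fixL_iff.1 hw] at hdiff
    exact (sub_right_injective hdiff).symm

theorem coboundaryOfUGbar_surjective (htor : torsion ℤ_[p] U ≤ fixL p U τ) (hτ : τ ^ p = 1) :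
    Function.Surjective (coboundaryOfUGbar htor) := by
  rintro ⟨_, ⟨u, rfl⟩, hfix⟩
  have hu : u - τ u ∈ torsion ℤ_[p] U :=
    τ.sub_apply_mem_torsion_of_pow_eq_one
      (mem_nonZeroDivisors_of_ne_zero (Nat.cast_ne_zero.2 (Fact.out : p.Prime).ne_zero)) hτ hfix
  exact ⟨⟨_, mkQ_mem_UGbar_iff.2 hu⟩, rfl⟩

end CoboundaryOfUGbar

theorem stmt_11_general (p : ℕ) [Fact p.Prime]
    (U : Type*) [AddCommGroup U] [Module ℤ_[p] U]
    (τ : U ≃ₗ[ℤ_[p]] U) (hτ : τ ^ p = 1)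
    (htor : Submodule.torsion ℤ_[p] U ≤ fixL p U τ) :
    ∃ φ : ↥(LinearMap.range (LinearMap.id - τ.toLinearMap) ⊓ fixL p U τ) ≃+
        (↥(UGbar p U τ) ⧸ (UFbar p U τ).comap (UGbar p U τ).subtype),
      ∀ (u : U)
        (h : u - τ u ∈ LinearMap.range (LinearMap.id - τ.toLinearMap) ⊓ fixL p U τ)
        (h2 : (Submodule.torsion ℤ_[p] U).mkQ u ∈ UGbar p U τ),
        φ ⟨u - τ u, h⟩ = Submodule.Quotient.mk
          (⟨(Submodule.torsion ℤ_[p] U).mkQ u, h2⟩ : ↥(UGbar p U τ)) := by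
  let ψ := (Submodule.quotEquivOfEq _ _ (ker_coboundaryOfUGbar htor).symm).trans
    ((coboundaryOfUGbar htor).quotKerEquivOfSurjective (coboundaryOfUGbar_surjective htor hτ))
  exact ⟨ψ.symm.toAddEquiv, fun u h h2 ↦ ψ.symm_apply_eq.2 rfl⟩

/-- Let `p` be an odd prime, `D = ⟨τ,σ⟩` dihedral of order `2p` acting on a `ℤ_p`-module
`U`, `G = ⟨τ⟩`.  Assume `tor(U) = tor(U^G)`, i.e. every torsion element of `U` is fixed
by `G`.  Then the map `φ : I_G U ∩ U^G → Ū^G/Ū_F`, `φ(u^{1-τ}) = class of u`, is a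
well-defined group isomorphism. -/
theorem stmt_11 (p : ℕ) [Fact p.Prime] (hp : Odd p)
    (U : Type*) [AddCommGroup U] [Module ℤ_[p] U]
    (τ σ : U ≃ₗ[ℤ_[p]] U) (hτ : τ ^ p = 1) (hσ : σ ^ 2 = 1) (hc : σ * τ * σ = τ⁻¹)
    (htor : Submodule.torsion ℤ_[p] U ≤ fixL p U τ) :
    ∃ φ : ↥(LinearMap.range (LinearMap.id - τ.toLinearMap) ⊓ fixL p U τ) ≃+
        (↥(UGbar p U τ) ⧸ (UFbar p U τ).comap (UGbar p U τ).subtype),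
      ∀ (u : U)
        (h : u - τ u ∈ LinearMap.range (LinearMap.id - τ.toLinearMap) ⊓ fixL p U τ)
        (h2 : (Submodule.torsion ℤ_[p] U).mkQ u ∈ UGbar p U τ),
        φ ⟨u - τ u, h⟩ = Submodule.Quotient.mk
          (⟨(Submodule.torsion ℤ_[p] U).mkQ u, h2⟩ : ↥(UGbar p U τ)) :=
  stmt_11_general p U τ hτ htor
end

section
/- With the same setup (p odd prime, D dihedral of order 2p acting on a ℤ_p-module U, G = ⟨τ⟩, tor(U) = tor(U^G)), the isomorphism φ : I_G U ∩ U^G → Ū^G/Ū_F is Δ-antiequivariant: if δ is the image of σ in Δ = D/G, then φ(δ(x)) = δ(φ(x))^{-1} for all x ∈ I_G U ∩ U^G. Consequently φ induces an isomorphism (I_G U ∩ U^G)/(I_G U ∩ U^D) ≅ Ū^D/(Ū_F)^Δ. -/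
/-- `Ū^Δ`: the fixed points of the induced action of `σ` on `Ū = U/tor(U)`. -/
noncomputable def USbar (p : ℕ) [Fact p.Prime] (U : Type*) [AddCommGroup U]
    [Module ℤ_[p] U] (σ : U ≃ₗ[ℤ_[p]] U) : Submodule ℤ_[p] (U ⧸ Submodule.torsion ℤ_[p] U) :=
  LinearMap.eqLocus (qmap p U σ) LinearMap.id

/-!
The map `ū ↦ u - τ u` is well defined on `Ū = U/tor U` because `τ` fixes the torsion; it sends
`Ū^G` onto `I_G U ∩ U^G` (an element `x = u - τ u` fixed by `τ` is killed by `p`, as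
`τ^p u = u - p • x`), and its kernel is `Ū_F`. The relation `τσ = στ⁻¹` gives, on `Ū^G`,
`σ u - τ σ u = σ (u - τ⁻¹ u) = -σ (u - τ u)`, which is the antiequivariance. As `2` is a unit in
`ℤ_p`, an antiequivariant surjection between modules with involutions identifies the fixed
points of the source, modulo the fixed part of the kernel, with the target modulo its fixed
points; this is the induced isomorphism.
-/

section AntiEquivariant

variable {R M N : Type*} [CommRing R] [AddCommGroup M] [Module R M]
  [AddCommGroup N] [Module R N] {s : M →ₗ[R] M} {t : N →ₗ[R] N} {f : M →ₗ[R] N}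
  {P : Submodule R M} {Y : Submodule R N}

theorem eq_zero_of_apply_eq_self_of_apply_eq_neg [Invertible (2 : R)] {n : N} (h₁ : t n = n)
    (h₂ : t n = -n) : n = 0 := by
  rw [← invOf_two_smul_add_invOf_two_smul R n]
  nth_rewrite 2 [← h₁]
  rw [h₂, smul_neg, add_neg_cancel]

variable (s t) in
noncomputable def fixedPointsQuotMap (hPY : P.map f = Y) :
    ↥(P ⊓ LinearMap.eqLocus s LinearMap.id) →ₗ[R]
      ↥Y ⧸ (Y ⊓ LinearMap.eqLocus t LinearMap.id).comap Y.subtype :=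
  ((Y ⊓ LinearMap.eqLocus t LinearMap.id).comap Y.subtype).mkQ ∘ₗ
    f.restrict (fun _ hm => hPY ▸ Submodule.mem_map_of_mem hm.1)

theorem ker_fixedPointsQuotMap [Invertible (2 : R)] (hPY : P.map f = Y)
    (hf : ∀ m ∈ P, f (s m) = -t (f m)) :
    LinearMap.ker (fixedPointsQuotMap s t hPY) =
      (LinearMap.ker f ⊓ LinearMap.eqLocus s LinearMap.id).comap
        (P ⊓ LinearMap.eqLocus s LinearMap.id).subtype := by
  ext ⟨m, hmP, hms⟩
  simp only [fixedPointsQuotMap, LinearMap.mem_ker, LinearMap.coe_comp, Function.comp_apply,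
    Submodule.mkQ_apply, Submodule.Quotient.mk_eq_zero, Submodule.mem_comap, Submodule.mem_inf,
    LinearMap.coe_restrict_apply, Submodule.subtype_apply, LinearMap.mem_eqLocus,
    LinearMap.id_coe, id_eq]
  refine ⟨fun ⟨_, hfix⟩ => ⟨eq_zero_of_apply_eq_self_of_apply_eq_neg hfix ?_, hms⟩,
    fun ⟨h0, _⟩ => by simp [h0]⟩
  have hfm : f m = -t (f m) := by simpa [show s m = m from hms] using hf m hmP
  exact (neg_eq_iff_eq_neg.mpr hfm).symm

theorem fixedPointsQuotMap_surjective [Invertible (2 : R)] (hs : ∀ m, s (s m) = m)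
    (ht : ∀ n, t (t n) = n) (hsP : ∀ m ∈ P, s m ∈ P) (hPY : P.map f = Y)
    (hf : ∀ m ∈ P, f (s m) = -t (f m)) :
    Function.Surjective (fixedPointsQuotMap s t hPY) := by
  intro q
  obtain ⟨⟨n, hn⟩, rfl⟩ := Submodule.Quotient.mk_surjective _ q
  obtain ⟨m, hmP, rfl⟩ := hPY ▸ hn
  -- `f (⅟2 • (m + s m)) = ⅟2 • (f m - t (f m))` differs from `f m` by the `t`-fixed
  -- element `-⅟2 • (f m + t (f m))`.
  refine ⟨⟨⅟2 • (m + s m), P.smul_mem _ (P.add_mem hmP (hsP m hmP)), ?_⟩, ?_⟩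
  · simp [hs, add_comm]
  · simp only [fixedPointsQuotMap, LinearMap.coe_comp, Function.comp_apply, Submodule.mkQ_apply]
    rw [Submodule.Quotient.eq, Submodule.mem_comap, Submodule.subtype_apply, Submodule.mem_inf]
    refine ⟨(_ : ↥Y).2, ?_⟩
    simp [hf m hmP, ht]
    linear_combination (norm := module) (invOf_two_add_invOf_two (R := R)) • (t (f m) - f m)

variable (s t) in
noncomputable def fixedPointsQuotEquiv [Invertible (2 : R)] (hs : ∀ m, s (s m) = m)
    (ht : ∀ n, t (t n) = n) (hsP : ∀ m ∈ P, s m ∈ P) (hPY : P.map f = Y)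
    (hf : ∀ m ∈ P, f (s m) = -t (f m)) :
    (↥(P ⊓ LinearMap.eqLocus s LinearMap.id) ⧸
        (LinearMap.ker f ⊓ LinearMap.eqLocus s LinearMap.id).comap
          (P ⊓ LinearMap.eqLocus s LinearMap.id).subtype) ≃ₗ[R]
      ↥Y ⧸ (Y ⊓ LinearMap.eqLocus t LinearMap.id).comap Y.subtype :=
  (Submodule.quotEquivOfEq _ _ (ker_fixedPointsQuotMap hPY hf).symm).trans
    ((fixedPointsQuotMap s t hPY).quotKerEquivOfSurjective
      (fixedPointsQuotMap_surjective hs ht hsP hPY hf))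

end AntiEquivariant

theorem mul_eq_mul_inv_of_mul_mul_eq_inv {G : Type*} [Group G] {σ τ : G} (hσ : σ ^ 2 = 1)
    (hc : σ * τ * σ = τ⁻¹) : τ * σ = σ * τ⁻¹ := by
  rw [← hc, ← mul_assoc, ← mul_assoc, ← sq, hσ, one_mul]

theorem LinearEquiv.pow_apply_eq_sub_nsmul {R M : Type*} [Semiring R] [AddCommGroup M]
    [Module R M] (e : M ≃ₗ[R] M) {u : M} (hu : e (u - e u) = u - e u) (k : ℕ) :
    (e ^ k) u = u - k • (u - e u) := by
  induction k with
  | zero => simp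
  | succ k ih =>
    rw [pow_succ', LinearEquiv.mul_apply, ih, map_sub, map_nsmul, hu, succ_nsmul]
    abel

theorem LinearEquiv.apply_apply_of_sq_eq_one {R M : Type*} [Semiring R] [AddCommMonoid M]
    [Module R M] {e : M ≃ₗ[R] M} (he : e ^ 2 = 1) (m : M) : e (e m) = m := by
  rw [← LinearEquiv.mul_apply, ← sq, he, LinearEquiv.coe_one, id]

theorem PadicInt.isUnit_two {p : ℕ} [Fact p.Prime] (hp : Odd p) : IsUnit (2 : ℤ_[p]) := by
  rw [PadicInt.isUnit_iff, ← Nat.cast_ofNat, PadicInt.norm_natCast_eq_one_iff,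
    Nat.coprime_two_right]
  exact hp

section Dihedral

variable {p : ℕ} [Fact p.Prime] {U : Type*} [AddCommGroup U] [Module ℤ_[p] U]

@[simp]
theorem qmap_mk (f : U ≃ₗ[ℤ_[p]] U) (u : U) :
    qmap p U f (Submodule.Quotient.mk u) = Submodule.Quotient.mk (f u) := rfl

theorem qmap_mul_apply (f g : U ≃ₗ[ℤ_[p]] U) (x : U ⧸ Submodule.torsion ℤ_[p] U) :
    qmap p U (f * g) x = qmap p U f (qmap p U g x) := by
  induction x using Submodule.Quotient.induction_on
  rfl

theorem qmap_one_apply (x : U ⧸ Submodule.torsion ℤ_[p] U) :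
    qmap p U 1 x = x := by
  induction x using Submodule.Quotient.induction_on
  rfl

theorem fixL_eq_eqLocus (f : U ≃ₗ[ℤ_[p]] U) :
    fixL p U f = LinearMap.eqLocus f.toLinearMap LinearMap.id := rfl

variable {τ σ : U ≃ₗ[ℤ_[p]] U}

theorem mk_mem_UGbar_iff {u : U} :
    Submodule.Quotient.mk u ∈ UGbar p U τ ↔ τ u - u ∈ Submodule.torsion ℤ_[p] U :=
  Submodule.Quotient.eq _

theorem qmap_inv_apply_of_mem_UGbar {x : U ⧸ Submodule.torsion ℤ_[p] U}
    (hx : x ∈ UGbar p U τ) : qmap p U τ⁻¹ x = x := by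
  conv_lhs => rw [← show qmap p U τ x = x from hx]
  rw [← qmap_mul_apply, inv_mul_cancel, qmap_one_apply]

theorem qmap_qmap_of_sq_eq_one (hσ : σ ^ 2 = 1) (x : U ⧸ Submodule.torsion ℤ_[p] U) :
    qmap p U σ (qmap p U σ x) = x := by
  rw [← qmap_mul_apply, ← sq, hσ, qmap_one_apply]

theorem qmap_mem_UGbar (hσ : σ ^ 2 = 1) (hc : σ * τ * σ = τ⁻¹)
    {x : U ⧸ Submodule.torsion ℤ_[p] U} (hx : x ∈ UGbar p U τ) :
    qmap p U σ x ∈ UGbar p U τ := by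
  change qmap p U τ (qmap p U σ x) = qmap p U σ x
  rw [← qmap_mul_apply, mul_eq_mul_inv_of_mul_mul_eq_inv hσ hc, qmap_mul_apply,
    qmap_inv_apply_of_mem_UGbar hx]

theorem mem_torsion_of_mem_range_inf_fixL (hτ : τ ^ p = 1) {x : U}
    (hx : x ∈ LinearMap.range (LinearMap.id - τ.toLinearMap) ⊓ fixL p U τ) :
    x ∈ Submodule.torsion ℤ_[p] U := by
  obtain ⟨⟨u, rfl⟩, hfix⟩ := hx
  have hpow := τ.pow_apply_eq_sub_nsmul hfix p
  rw [hτ] at hpow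
  refine ⟨⟨p, mem_nonZeroDivisors_of_ne_zero ?_⟩, ?_⟩
  · exact_mod_cast (Fact.out : p.Prime).ne_zero
  · rw [Submonoid.smul_def, Nat.cast_smul_eq_nsmul]
    exact sub_eq_self.mp hpow.symm

theorem apply_mem_fixL (hσ : σ ^ 2 = 1) (hc : σ * τ * σ = τ⁻¹) {v : U}
    (hv : v ∈ fixL p U τ) : σ v ∈ fixL p U τ := by
  change τ (σ v) = σ v
  rw [← LinearEquiv.mul_apply, mul_eq_mul_inv_of_mul_mul_eq_inv hσ hc, LinearEquiv.mul_apply]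
  exact congrArg σ (τ.symm_apply_eq.mpr (Eq.symm hv))

noncomputable def qmapUGbarQuot (hσ : σ ^ 2 = 1) (hc : σ * τ * σ = τ⁻¹) :
    (↥(UGbar p U τ) ⧸ (UFbar p U τ).comap (UGbar p U τ).subtype) →ₗ[ℤ_[p]]
      ↥(UGbar p U τ) ⧸ (UFbar p U τ).comap (UGbar p U τ).subtype :=
  Submodule.mapQ _ _ ((qmap p U σ).restrict fun _ hx => qmap_mem_UGbar hσ hc hx) <| by
    rintro z ⟨v, hv, hvz⟩
    refine ⟨σ v, apply_mem_fixL hσ hc hv, ?_⟩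
    change _ = qmap p U σ z
    rw [← Submodule.subtype_apply, ← hvz]
    rfl

variable (τ) in
noncomputable def oneSubLift (htor : Submodule.torsion ℤ_[p] U ≤ fixL p U τ) :
    (U ⧸ Submodule.torsion ℤ_[p] U) →ₗ[ℤ_[p]] U :=
  (Submodule.torsion ℤ_[p] U).liftQ (LinearMap.id - τ.toLinearMap) fun t ht => by
    simp [show τ t = t from htor ht]

variable (htor : Submodule.torsion ℤ_[p] U ≤ fixL p U τ)

@[simp]
theorem oneSubLift_mk (u : U) :
    oneSubLift τ htor (Submodule.Quotient.mk u) = u - τ u := rfl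

theorem ker_oneSubLift : LinearMap.ker (oneSubLift τ htor) = UFbar p U τ := by
  ext x
  induction x using Submodule.Quotient.induction_on with | H u => ?_
  simp only [LinearMap.mem_ker, oneSubLift_mk, sub_eq_zero, UFbar, Submodule.mem_map,
    Submodule.mkQ_apply, Submodule.Quotient.eq]
  refine ⟨fun h => ⟨u, h.symm, by simp⟩, fun ⟨v, hv, hvu⟩ => ?_⟩
  have hu : u = v - (v - u) := by abel
  exact (hu ▸ (fixL p U τ).sub_mem hv (htor hvu) : u ∈ fixL p U τ).symm

theorem map_oneSubLift_UGbar (hτ : τ ^ p = 1) :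
    (UGbar p U τ).map (oneSubLift τ htor) =
      LinearMap.range (LinearMap.id - τ.toLinearMap) ⊓ fixL p U τ := by
  ext x
  constructor
  · rintro ⟨y, hy, rfl⟩
    induction y using Submodule.Quotient.induction_on with | H u => ?_
    have hfix := htor (mk_mem_UGbar_iff.mp hy)
    refine ⟨⟨u, rfl⟩, ?_⟩
    rw [oneSubLift_mk, ← neg_sub]
    exact (fixL p U τ).neg_mem hfix
  · intro hx
    have hxt := mem_torsion_of_mem_range_inf_fixL hτ hx
    obtain ⟨⟨u, rfl⟩, -⟩ := hx
    refine ⟨Submodule.Quotient.mk u, mk_mem_UGbar_iff.mpr ?_, rfl⟩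
    rw [← neg_sub]
    exact (Submodule.torsion ℤ_[p] U).neg_mem hxt

theorem oneSubLift_qmap (hσ : σ ^ 2 = 1) (hc : σ * τ * σ = τ⁻¹)
    {x : U ⧸ Submodule.torsion ℤ_[p] U} (hx : x ∈ UGbar p U τ) :
    oneSubLift τ htor (qmap p U σ x) = -σ (oneSubLift τ htor x) := by
  induction x using Submodule.Quotient.induction_on with | H u => ?_
  have hfix : τ (τ u - u) = τ u - u := htor (mk_mem_UGbar_iff.mp hx)
  rw [qmap_mk, oneSubLift_mk, oneSubLift_mk, ← LinearEquiv.mul_apply,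
    mul_eq_mul_inv_of_mul_mul_eq_inv hσ hc, LinearEquiv.mul_apply, ← map_sub, ← map_neg, neg_sub]
  congr 1
  apply τ.injective
  rw [hfix, map_sub]
  simp

noncomputable def oneSubLiftEquiv (hτ : τ ^ p = 1) :
    (↥(UGbar p U τ) ⧸ (UFbar p U τ).comap (UGbar p U τ).subtype) ≃ₗ[ℤ_[p]]
      ↥(LinearMap.range (LinearMap.id - τ.toLinearMap) ⊓ fixL p U τ) :=
  (Submodule.quotEquivOfEq _ _ (by rw [LinearMap.ker_restrict, ker_oneSubLift])).trans
    (((oneSubLift τ htor).restrict fun _ hx =>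
      map_oneSubLift_UGbar htor hτ ▸ Submodule.mem_map_of_mem hx).quotKerEquivOfSurjective <| by
        rw [← LinearMap.range_eq_top, LinearMap.range_restrict, map_oneSubLift_UGbar htor hτ,
          Submodule.comap_subtype_self])

theorem coe_oneSubLiftEquiv_qmapUGbarQuot (hτ : τ ^ p = 1) (hσ : σ ^ 2 = 1)
    (hc : σ * τ * σ = τ⁻¹) (q : ↥(UGbar p U τ) ⧸ (UFbar p U τ).comap (UGbar p U τ).subtype) :
    (oneSubLiftEquiv htor hτ (qmapUGbarQuot hσ hc q) : U) = -σ (oneSubLiftEquiv htor hτ q) := by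
  induction q using Submodule.Quotient.induction_on with | H z => ?_
  exact oneSubLift_qmap htor hσ hc z.2

end Dihedral

/-- Same setup as in the previous statement: `p` an odd prime, `D = ⟨τ,σ⟩` dihedral of
order `2p` acting on a `ℤ_p`-module `U`, `G = ⟨τ⟩`, `tor(U) = tor(U^G)`.  The isomorphism
`φ : I_G U ∩ U^G ≅ Ū^G/Ū_F`, `φ(u^{1-τ}) = ū mod Ū_F`, is `Δ`-antiequivariant: if `δ` is
the image of `σ` in `Δ = D/G`, acting on the source via `σ` and on the target via the map
`ψ` induced by `σ̄`, then `φ(δ(x)) = δ(φ(x))⁻¹` (written additively: `φ(σ x) = -ψ(φ x)`).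
Consequently `φ` induces an isomorphism
`(I_G U ∩ U^G)/(I_G U ∩ U^D) ≅ Ū^D/(Ū_F)^Δ`. -/
theorem stmt_12 (p : ℕ) [Fact p.Prime] (hp : Odd p)
    (U : Type*) [AddCommGroup U] [Module ℤ_[p] U]
    (τ σ : U ≃ₗ[ℤ_[p]] U) (hτ : τ ^ p = 1) (hσ : σ ^ 2 = 1) (hc : σ * τ * σ = τ⁻¹)
    (htor : Submodule.torsion ℤ_[p] U ≤ fixL p U τ) :
    ∃ (φ : ↥(LinearMap.range (LinearMap.id - τ.toLinearMap) ⊓ fixL p U τ) ≃+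
        (↥(UGbar p U τ) ⧸ (UFbar p U τ).comap (UGbar p U τ).subtype))
      (ψ : (↥(UGbar p U τ) ⧸ (UFbar p U τ).comap (UGbar p U τ).subtype) →+
        (↥(UGbar p U τ) ⧸ (UFbar p U τ).comap (UGbar p U τ).subtype)),
      -- φ is the map of the previous statement
      (∀ (u : U)
        (h : u - τ u ∈ LinearMap.range (LinearMap.id - τ.toLinearMap) ⊓ fixL p U τ)
        (h2 : (Submodule.torsion ℤ_[p] U).mkQ u ∈ UGbar p U τ),
        φ ⟨u - τ u, h⟩ = Submodule.Quotient.mk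
          (⟨(Submodule.torsion ℤ_[p] U).mkQ u, h2⟩ : ↥(UGbar p U τ))) ∧
      -- ψ is the map induced on `Ū^G/Ū_F` by `σ̄`
      (∀ (x : U ⧸ Submodule.torsion ℤ_[p] U) (hx : x ∈ UGbar p U τ)
        (hx' : qmap p U σ x ∈ UGbar p U τ),
        ψ (Submodule.Quotient.mk (⟨x, hx⟩ : ↥(UGbar p U τ)))
          = Submodule.Quotient.mk (⟨qmap p U σ x, hx'⟩ : ↥(UGbar p U τ))) ∧
      -- antiequivariance: φ(δ x) = δ(φ x)⁻¹
      (∀ (x : ↥(LinearMap.range (LinearMap.id - τ.toLinearMap) ⊓ fixL p U τ))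
        (hx : σ (x : U) ∈ LinearMap.range (LinearMap.id - τ.toLinearMap) ⊓ fixL p U τ),
        φ ⟨σ (x : U), hx⟩ = - ψ (φ x)) ∧
      -- the induced isomorphism `(I_G U ∩ U^G)/(I_G U ∩ U^D) ≅ Ū^D/(Ū_F)^Δ`
      Nonempty
        ((↥(LinearMap.range (LinearMap.id - τ.toLinearMap) ⊓ fixL p U τ) ⧸
            ((LinearMap.range (LinearMap.id - τ.toLinearMap) ⊓ (fixL p U τ ⊓ fixL p U σ)).comap
              (LinearMap.range (LinearMap.id - τ.toLinearMap) ⊓ fixL p U τ).subtype)) ≃+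
          (↥(UGbar p U τ ⊓ USbar p U σ) ⧸
            ((UFbar p U τ ⊓ USbar p U σ).comap (UGbar p U τ ⊓ USbar p U σ).subtype))) := by
  have : Invertible (2 : ℤ_[p]) := (PadicInt.isUnit_two hp).invertible
  refine ⟨(oneSubLiftEquiv htor hτ).symm.toAddEquiv, (qmapUGbarQuot hσ hc).toAddMonoidHom,
    fun _ _ _ => (oneSubLiftEquiv htor hτ).symm_apply_eq.mpr rfl, fun _ _ _ => rfl, ?_, ?_⟩
  · intro x hx
    change (oneSubLiftEquiv htor hτ).symm _ =
      -qmapUGbarQuot hσ hc ((oneSubLiftEquiv htor hτ).symm x)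
    rw [LinearEquiv.symm_apply_eq, map_neg]
    ext
    rw [Submodule.coe_neg, coe_oneSubLiftEquiv_qmapUGbarQuot, LinearEquiv.apply_symm_apply, neg_neg]
  · rw [← inf_assoc, fixL_eq_eqLocus σ, ← ker_oneSubLift htor]
    exact ⟨(fixedPointsQuotEquiv (qmap p U σ) σ.toLinearMap (qmap_qmap_of_sq_eq_one hσ)
      (LinearEquiv.apply_apply_of_sq_eq_one hσ) (fun _ => qmap_mem_UGbar hσ hc)
      (map_oneSubLift_UGbar htor hτ) (fun _ => oneSubLift_qmap htor hσ hc)).symm.toAddEquiv⟩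
end

section
/- Let p be an odd prime and L/k a Galois extension of number fields with Galois group the dihedral group D of order 2p; let F be the fixed field of the rotation subgroup ⟨τ⟩ and K the fixed field of ⟨σ⟩. Then for every m ≥ 2: w_{L,m} = w_{F,m} and w_{K,m} = w_{k,m}, where w_{E,m} denotes the order of the torsion subgroup of H^1(O_E, ℤ(m)). -/
/-!
Let `A = L(μ_n)`, a normal extension of `k`, and `χ : Gal(A/k) → (ℤ/n)ˣ` its mod-`n` cyclotomic
character. For every intermediate field `E` of `A/k`, the condition defining `w_{E,m}` at level `n`
says that `χ^m` is trivial on `Gal(A/E)`. Since `χ` takes values in an abelian group it kills the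
commutator subgroup of `Gal(A/k)`, whose image in `D = Gal(L/k)` is `[D, D] = ⟨τ⟩` because `p` is
odd. So `χ(Gal(A/L)) = χ(Gal(A/F))`, and `χ(Gal(A/K)) = χ(Gal(A/k))` as `⟨σ⟩⟨τ⟩ = D`.
-/

/-- `wm E m` is the order of the torsion subgroup of `H^1(O_E, ℤ(m))`, via its classical
characterisation `w_{E,m} = |H^0(E, ℚ/ℤ(m))|`: the largest `n` such that
`Gal(E(μ_n)/E)` has exponent dividing `m`, i.e. such that `g^m` fixes every `n`-th root
of unity in `E(μ_n)` for every `g ∈ Gal(E(μ_n)/E)`. -/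
noncomputable def wm (E : Type*) [Field E] [CharZero E] (m : ℕ) : ℕ :=
  sSup {k : ℕ | ∃ n : ℕ+, k = (n : ℕ) ∧
    ∀ (g : CyclotomicField n E ≃ₐ[E] CyclotomicField n E) (ζ : CyclotomicField n E),
      ζ ^ (n : ℕ) = 1 → (g ^ m) ζ = ζ}

open scoped commutatorElement

namespace DihedralGroup

theorem r_two_mul_mem_commutator {n : ℕ} (j : ZMod n) :
    r (2 * j) ∈ commutator (DihedralGroup n) := by
  have h : ⁅r j, sr (0 : ZMod n)⁆ = r (2 * j) := by
    simp only [commutatorElement_def, r_mul_sr, sr_mul_r, sr_mul_sr, inv_r, inv_sr]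
    ring_nf
  exact h ▸ Subgroup.commutator_mem_commutator (Subgroup.mem_top _) (Subgroup.mem_top _)

theorem r_mem_commutator {n : ℕ} (hn : Odd n) (i : ZMod n) :
    r i ∈ commutator (DihedralGroup n) := by
  have h2 : IsUnit (2 : ZMod n) := by
    simpa using (ZMod.unitOfCoprime 2 (Nat.coprime_comm.mp hn.coprime_two_right)).isUnit
  simpa [← mul_assoc, h2.mul_val_inv] using r_two_mul_mem_commutator (n := n) (h2.unit⁻¹ * i)

theorem zpowers_sr_sup_commutator {n : ℕ} (hn : Odd n) :
    Subgroup.zpowers (sr (0 : ZMod n)) ⊔ commutator (DihedralGroup n) = ⊤ := by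
  refine eq_top_iff.mpr fun x _ => ?_
  rcases x with i | i
  · exact Subgroup.mem_sup_right (r_mem_commutator hn i)
  · have h : sr (0 : ZMod n) * r i = sr i := by simp [sr_mul_r]
    exact h ▸ Subgroup.mul_mem_sup (Subgroup.mem_zpowers _) (r_mem_commutator hn i)

end DihedralGroup

theorem forall_comap_iff_of_le_sup_commutator {G Q U : Type*} [Group G] [Group Q] [CommGroup U]
    {π : G →* Q} (hπ : Function.Surjective π) (χ : G →* U) (P : U → Prop)
    {H H' : Subgroup Q} (hle : H ≤ H') (hle' : H' ≤ H ⊔ commutator Q) :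
    (∀ g, π g ∈ H → P (χ g)) ↔ ∀ g, π g ∈ H' → P (χ g) := by
  refine ⟨fun h g hg => ?_, fun h g hg => h g (hle hg)⟩
  obtain ⟨a, ha, c, hc, hac⟩ := Subgroup.mem_sup_of_normal_right.mp (hle' hg)
  have hc' : c ∈ (commutator G).map π := by
    rwa [commutator_def, Subgroup.map_commutator, ← MonoidHom.range_eq_map,
      MonoidHom.range_eq_top.mpr hπ]
  obtain ⟨c', hc'G, rfl⟩ := hc'
  have hχc' : χ c' = 1 := Abelianization.commutator_subset_ker χ hc'G
  have hπ' : π (g * c'⁻¹) ∈ H := by rwa [map_mul, map_inv, ← hac, mul_inv_cancel_right]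
  simpa [hχc'] using h _ hπ'

open Polynomial

theorem IsPrimitiveRoot.autToPow_eq_one_iff {R S : Type*} [CommRing R] [CommRing S] [IsDomain S]
    [Algebra R S] {μ : S} {n : ℕ} [NeZero n] (hμ : IsPrimitiveRoot μ n) (f : S ≃ₐ[R] S) :
    hμ.autToPow R f = 1 ↔ ∀ ζ : S, ζ ^ n = 1 → f ζ = ζ := by
  have hμ1 : μ ^ (1 : ZMod n).val = μ := by
    rw [ZMod.val_one_eq_one_mod, hμ.eq_orderOf, pow_mod_orderOf, pow_one]
  refine ⟨fun h ζ hζ => ?_, fun h => ?_⟩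
  · obtain ⟨j, -, rfl⟩ := hμ.eq_pow_of_pow_eq_one hζ
    rw [map_pow, ← hμ.autToPow_spec R f, h, Units.val_one, hμ1]
  · refine Units.ext (ZMod.val_injective n (hμ.pow_inj (ZMod.val_lt _) (ZMod.val_lt _) ?_))
    rw [hμ.autToPow_spec R f, h μ hμ.pow_eq_one, Units.val_one, hμ1]

def PowFixesRootsOfUnity (E : Type*) [Field E] (n : ℕ+) (m : ℕ) : Prop :=
  ∀ (g : CyclotomicField n E ≃ₐ[E] CyclotomicField n E) (ζ : CyclotomicField n E),
    ζ ^ (n : ℕ) = 1 → (g ^ m) ζ = ζ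

theorem wm_congr {E E' : Type*} [Field E] [CharZero E] [Field E'] [CharZero E'] {m : ℕ}
    (h : ∀ n, PowFixesRootsOfUnity E n m ↔ PowFixesRootsOfUnity E' n m) : wm E m = wm E' m := by
  unfold wm
  congr 1
  ext k
  exact exists_congr fun n => and_congr_right fun _ => h n

theorem forall_pow_fixes_iff_of_commute {E B A : Type*} [Field E] [Field B] [Field A]
    [Algebra E B] [Algebra E A] (ι : B →ₐ[E] A) {n : ℕ} [NeZero n] {ζ₀ : B}
    (hζ₀ : IsPrimitiveRoot ζ₀ n) (h : B ≃ₐ[E] B) (g : A ≃ₐ[E] A) (hc : ∀ x, g (ι x) = ι (h x))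
    (m : ℕ) :
    (∀ ζ : A, ζ ^ n = 1 → (g ^ m) ζ = ζ) ↔ ∀ ζ : B, ζ ^ n = 1 → (h ^ m) ζ = ζ := by
  have hcm : ∀ x, (g ^ m) (ι x) = ι ((h ^ m) x) := fun x => by
    simpa only [AlgEquiv.coe_pow] using
      ((Function.Semiconj.iterate_right (f := ι) (fun x => (hc x).symm) m) x).symm
  have hι : Function.Injective ι := ι.toRingHom.injective
  refine ⟨fun hA ζ hζ => hι ?_, fun hB ζ hζ => ?_⟩
  · rw [← hcm, hA _ (by rw [← map_pow, hζ, map_one])]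
  · obtain ⟨j, -, rfl⟩ := (hζ₀.map_of_injective hι).eq_pow_of_pow_eq_one hζ
    rw [← map_pow, hcm, hB _ (by rw [← pow_mul, mul_comm, pow_mul, hζ₀.pow_eq_one, one_pow])]

theorem powFixesRootsOfUnity_iff_forall_algEquiv {E A : Type*} [Field E] [Field A] [Algebra E A]
    [Normal E A] {n : ℕ+} {ζ : A} (hζ : IsPrimitiveRoot ζ n) (m : ℕ) :
    PowFixesRootsOfUnity E n m ↔ ∀ (g : A ≃ₐ[E] A) (z : A), z ^ (n : ℕ) = 1 → (g ^ m) z = z := by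
  have : NeZero ((n : ℕ) : A) := hζ.neZero'
  have : NeZero (algebraMap E A (n : ℕ)) := by rwa [map_natCast]
  have : NeZero ((n : ℕ) : E) := NeZero.of_map (algebraMap E A)
  let B := CyclotomicField n E
  have hsplit : Splits ((cyclotomic n E).map (algebraMap E A)) := by
    rw [map_cyclotomic, cyclotomic_eq_prod_X_sub_primitiveRoots hζ]
    exact Splits.prod fun _ _ => Splits.X_sub_C _
  have := IsCyclotomicExtension.splitting_field_cyclotomic n E B
  let ι : B →ₐ[E] A := IsSplittingField.lift B (cyclotomic n E) hsplit
  let _ : Algebra B A := ι.toAlgebra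
  have : IsScalarTower E B A := IsScalarTower.of_algebraMap_eq fun x => (ι.commutes x).symm
  have : Normal E B := Normal.of_isSplittingField (cyclotomic n E)
  have hζB := IsCyclotomicExtension.zeta_spec n E B
  refine ⟨fun hB g => ?_, fun hA h => ?_⟩
  · exact (forall_pow_fixes_iff_of_commute ι hζB _ g
      (fun x => (AlgEquiv.restrictNormal_commutes g B x).symm) m).2 (hB _)
  · exact (forall_pow_fixes_iff_of_commute ι hζB h _ (AlgEquiv.liftNormal_commutes h A) m).1 (hA _)

theorem powFixesRootsOfUnity_iff_forall_autToPow (k : Type*) {E A : Type*} [Field k] [Field E]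
    [Field A] [Algebra k E] [Algebra k A] [Algebra E A] [IsScalarTower k E A] [Normal k A]
    {n : ℕ+} {ζ : A} (hζ : IsPrimitiveRoot ζ n) (m : ℕ) :
    PowFixesRootsOfUnity E n m ↔ ∀ g : A ≃ₐ[k] A,
      (∀ x : E, g (algebraMap E A x) = algebraMap E A x) → hζ.autToPow k g ^ m = 1 := by
  have : Normal E A := Normal.tower_top_of_normal k E A
  simp only [powFixesRootsOfUnity_iff_forall_algEquiv hζ, ← map_pow, hζ.autToPow_eq_one_iff,
    AlgEquiv.coe_pow]
  exact ⟨fun h g hg => h (AlgEquiv.ofRingEquiv (f := g.toRingEquiv) hg),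
    fun h g => h (g.restrictScalars k) g.commutes⟩

theorem Normal.exists_ne_zero_isSplittingField (F K : Type*) [Field F] [Field K] [Algebra F K]
    [Normal F K] [FiniteDimensional F K] : ∃ f : F[X], f ≠ 0 ∧ IsSplittingField F K f := by
  obtain ⟨f, hf⟩ := Normal.exists_isSplittingField F K
  by_cases hf0 : f = 0
  · refine ⟨1, one_ne_zero, ⟨by simp, ?_⟩⟩
    simpa [hf0] using hf.adjoin_rootSet'
  · exact ⟨f, hf0, hf⟩

theorem normal_cyclotomicField (k L : Type*) [Field k] [Field L] [Algebra k L] [Normal k L]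
    [FiniteDimensional k L] (n : ℕ+) [NeZero ((n : ℕ) : L)] : Normal k (CyclotomicField n L) := by
  obtain ⟨f, hf0, hf⟩ := Normal.exists_ne_zero_isSplittingField k L
  have : IsSplittingField L (CyclotomicField n L) ((cyclotomic n k).map (algebraMap k L)) := by
    rw [map_cyclotomic]
    exact IsCyclotomicExtension.splitting_field_cyclotomic n L _
  have := IsSplittingField.mul (K := L) (CyclotomicField n L) f _ hf0 (cyclotomic_ne_zero n k)
  exact Normal.of_isSplittingField (f * cyclotomic n k)

section restrictNormal

variable {k L A : Type*} [Field k] [Field L] [Field A] [Algebra k L] [Algebra k A] [Algebra L A]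
  [IsScalarTower k L A] [Normal k L] (g : A ≃ₐ[k] A)

theorem AlgEquiv.restrictNormal_apply_eq_self_iff (x : L) :
    g.restrictNormal L x = x ↔ g (algebraMap L A x) = algebraMap L A x := by
  rw [← AlgEquiv.restrictNormal_commutes, (algebraMap L A).injective.eq_iff]

theorem AlgEquiv.restrictNormalHom_eq_one_iff :
    restrictNormalHom L g = 1 ↔ ∀ x : L, g (algebraMap L A x) = algebraMap L A x := by
  simp only [AlgEquiv.ext_iff, AlgEquiv.one_apply, ← AlgEquiv.restrictNormal_apply_eq_self_iff]
  rfl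

theorem AlgEquiv.restrictNormalHom_mem_fixingSubgroup_iff (F : IntermediateField k L) :
    restrictNormalHom L g ∈ F.fixingSubgroup ↔
      ∀ x : F, g (algebraMap F A x) = algebraMap F A x := by
  simp only [IntermediateField.mem_fixingSubgroup_iff, IsScalarTower.algebraMap_apply F L A,
    ← AlgEquiv.restrictNormal_apply_eq_self_iff]
  exact ⟨fun h x => h x x.2, fun h x hx => h ⟨x, hx⟩⟩

end restrictNormal

theorem powFixesRootsOfUnity_iff_of_dihedral {p : ℕ} (hp : Odd p) {k L : Type*} [Field k]
    [Field L] [CharZero L] [Algebra k L] [Normal k L] [FiniteDimensional k L]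
    (e : (L ≃ₐ[k] L) ≃* DihedralGroup p) (n : ℕ+) (m : ℕ) :
    (PowFixesRootsOfUnity L n m ↔ PowFixesRootsOfUnity
      (IntermediateField.fixedField (Subgroup.zpowers (e.symm (DihedralGroup.r 1)))) n m) ∧
    (PowFixesRootsOfUnity
      (IntermediateField.fixedField (Subgroup.zpowers (e.symm (DihedralGroup.sr 0)))) n m ↔
      PowFixesRootsOfUnity k n m) := by
  let A := CyclotomicField n L
  have : Normal k A := normal_cyclotomicField k L n
  have hζ := IsCyclotomicExtension.zeta_spec n L A
  let π : (A ≃ₐ[k] A) →* DihedralGroup p := e.toMonoidHom.comp (AlgEquiv.restrictNormalHom L)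
  have hπ : Function.Surjective π := e.surjective.comp (AlgEquiv.restrictNormalHom_surjective A)
  have hL : PowFixesRootsOfUnity L n m ↔
      ∀ g, π g ∈ (⊥ : Subgroup _) → hζ.autToPow k g ^ m = 1 := by
    simp [powFixesRootsOfUnity_iff_forall_autToPow k hζ, π, AlgEquiv.restrictNormalHom_eq_one_iff]
  have hk : PowFixesRootsOfUnity k n m ↔
      ∀ g, π g ∈ (⊤ : Subgroup _) → hζ.autToPow k g ^ m = 1 := by
    simp [powFixesRootsOfUnity_iff_forall_autToPow k hζ]
  have hfixed (x : DihedralGroup p) :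
      PowFixesRootsOfUnity (IntermediateField.fixedField (Subgroup.zpowers (e.symm x))) n m ↔
        ∀ g, π g ∈ Subgroup.zpowers x → hζ.autToPow k g ^ m = 1 := by
    rw [powFixesRootsOfUnity_iff_forall_autToPow k hζ]
    refine forall_congr' fun g => imp_congr_left ?_
    rw [← AlgEquiv.restrictNormalHom_mem_fixingSubgroup_iff,
      IntermediateField.fixingSubgroup_fixedField]
    simp [π, Subgroup.mem_zpowers_iff, ← map_zpow, MulEquiv.symm_apply_eq]
  rw [hL, hk, hfixed, hfixed]
  constructor
  · refine forall_comap_iff_of_le_sup_commutator hπ _ (· ^ m = 1) bot_le ?_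
    rw [bot_sup_eq, Subgroup.zpowers_le]
    exact DihedralGroup.r_mem_commutator hp 1
  · exact forall_comap_iff_of_le_sup_commutator hπ _ (· ^ m = 1) le_top
      (DihedralGroup.zpowers_sr_sup_commutator hp).ge

theorem stmt_17_general (p : ℕ) (hp : Odd p)
    (k L : Type*) [Field k] [Field L] [NumberField k] [NumberField L]
    [Algebra k L] [IsGalois k L]
    (e : (L ≃ₐ[k] L) ≃* DihedralGroup p) :
    ∀ m : ℕ, 2 ≤ m →
      wm L m
          = wm (IntermediateField.fixedField
              (Subgroup.zpowers (e.symm (DihedralGroup.r (1 : ZMod p))))) m ∧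
      wm (IntermediateField.fixedField
              (Subgroup.zpowers (e.symm (DihedralGroup.sr (0 : ZMod p))))) m
          = wm k m := by
  intro m _
  exact ⟨wm_congr fun n => (powFixesRootsOfUnity_iff_of_dihedral hp e n m).1,
    wm_congr fun n => (powFixesRootsOfUnity_iff_of_dihedral hp e n m).2⟩

/-- Let `p` be an odd prime and `L/k` a Galois extension of number fields with Galois
group the dihedral group `D` of order `2p`; let `F` be the fixed field of the rotation
subgroup `⟨τ⟩` and `K` the fixed field of `⟨σ⟩`.  Then for every `m ≥ 2`:
`w_{L,m} = w_{F,m}` and `w_{K,m} = w_{k,m}`, where `w_{E,m}` is the order of the torsion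
subgroup of `H^1(O_E, ℤ(m))`. -/
theorem stmt_17 (p : ℕ) [Fact p.Prime] (hp : Odd p)
    (k L : Type*) [Field k] [Field L] [NumberField k] [NumberField L]
    [Algebra k L] [IsGalois k L]
    (e : (L ≃ₐ[k] L) ≃* DihedralGroup p) :
    ∀ m : ℕ, 2 ≤ m →
      wm L m
          = wm (IntermediateField.fixedField
              (Subgroup.zpowers (e.symm (DihedralGroup.r (1 : ZMod p))))) m ∧
      wm (IntermediateField.fixedField
              (Subgroup.zpowers (e.symm (DihedralGroup.sr (0 : ZMod p))))) m
          = wm k m :=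
  stmt_17_general p hp k L e
end

section
/- Let p be an odd prime, D the dihedral group of order 2p with G = ⟨τ⟩ and σ of order 2, and let U be a ℤ_p-module with D-action. Set T = {u ∈ U : u^{1+σ} ∈ I_G U}. Then T = I_D U, the augmentation submodule for D. -/
/-- Let `p` be an odd prime, `D = ⟨τ,σ⟩` dihedral of order `2p` acting on a `ℤ_p`-module
`U`.  Set `T = {u ∈ U : u^{1+σ} ∈ I_G U}` (additively, `u + σ(u) ∈ I_G U`).  Then
`T = I_D U`, the augmentation submodule for `D` (spanned by the elements `g(u) - u` for
`g ∈ {τ, σ}`, which generate `D`). -/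
theorem stmt_19 (p : ℕ) [Fact p.Prime] (hp : Odd p)
    {U : Type*} [AddCommGroup U] [Module ℤ_[p] U]
    (τ σ : U ≃ₗ[ℤ_[p]] U) (hτ : τ ^ p = 1) (hσ : σ ^ 2 = 1) (hc : σ * τ * σ = τ⁻¹) :
    ∀ u : U, u + σ u ∈ LinearMap.range (τ.toLinearMap - LinearMap.id) ↔
      u ∈ Submodule.span ℤ_[p]
        (Set.range (fun v : U => τ v - v) ∪ Set.range (fun v : U => σ v - v)) := by
  set S := Submodule.span ℤ_[p]
      (Set.range (fun v : U => τ v - v) ∪ Set.range (fun v : U => σ v - v)) with hS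
  have hσσ : ∀ v : U, σ (σ v) = v := by
    intro v
    have := DFunLike.congr_fun hσ v
    simpa [pow_two] using this
  have hστ : ∀ v : U, σ (τ v) = τ⁻¹ (σ v) := by
    intro v
    have h : σ * τ = τ⁻¹ * σ := by
      calc σ * τ = σ * τ * σ * σ := by rw [mul_assoc, ← pow_two, hσ, mul_one]
        _ = τ⁻¹ * σ := by rw [hc]
    simpa using DFunLike.congr_fun h v
  have hτmem : ∀ v : U, τ v - v ∈ S := fun v =>
    Submodule.subset_span (Or.inl ⟨v, rfl⟩)
  have hσmem : ∀ v : U, σ v - v ∈ S := fun v =>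
    Submodule.subset_span (Or.inr ⟨v, rfl⟩)
  have h2 : IsUnit (2 : ℤ_[p]) := by
    rw [PadicInt.isUnit_iff]
    have hle : ‖(2 : ℤ_[p])‖ ≤ 1 := PadicInt.norm_le_one _
    have hnd : ¬ ((p : ℤ) ∣ 2) := by
      intro h
      have h1 := Int.le_of_dvd (by norm_num) h
      obtain ⟨k, hk⟩ := hp
      have := (Fact.out : p.Prime).two_le
      omega
    have : ¬ ‖((2 : ℤ) : ℤ_[p])‖ < 1 := by
      rw [PadicInt.norm_int_lt_one_iff_dvd]; exact_mod_cast hnd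
    push_cast at this
    linarith [lt_or_eq_of_le hle |>.resolve_left (by exact_mod_cast this)]
  intro u
  constructor
  · rintro ⟨v, hv⟩
    have h1 : u + σ u ∈ S := by
      have : u + σ u = τ v - v := by
        rw [← hv]; simp
      rw [this]; exact hτmem v
    have h2u : (2 : ℤ_[p]) • u ∈ S := by
      have he : (2 : ℤ_[p]) • u = (u + σ u) - (σ u - u) := by
        rw [two_smul]; abel
      rw [he]; exact S.sub_mem h1 (hσmem u)
    have := S.smul_mem (↑h2.unit⁻¹ : ℤ_[p]) h2u
    rwa [smul_smul, IsUnit.val_inv_mul, one_smul] at this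
  · intro hu
    set f : U →ₗ[ℤ_[p]] U := LinearMap.id + σ.toLinearMap with hf
    have hle : S ≤ Submodule.comap f (LinearMap.range (τ.toLinearMap - LinearMap.id)) := by
      rw [hS]
      apply Submodule.span_le.mpr
      rintro x (⟨v, rfl⟩ | ⟨v, rfl⟩)
      · refine ⟨v - τ⁻¹ (σ v), ?_⟩
        have hτinv : τ (τ⁻¹ (σ v)) = σ v := DFunLike.congr_fun (mul_inv_cancel τ) (σ v)
        simp only [hf, LinearMap.sub_apply, LinearMap.id_coe, id_eq, LinearMap.add_apply,
          LinearEquiv.coe_coe, map_sub, hστ v, hτinv]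
        abel
      · refine ⟨0, ?_⟩
        simp only [hf, LinearMap.sub_apply, LinearMap.id_coe, id_eq, LinearMap.add_apply,
          LinearEquiv.coe_coe, map_sub, map_zero, hσσ v]
        abel
    have := hle hu
    simpa [hf] using this
end
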